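/- arXiv:2305.17572 — 3 statements merged into one kernel-verified Lean document; each statement's English description precedes it below -/
import Mathlib

section
/- Let f be a regulated function on (a,b). The following are equivalent: (1) f^- is strictly increasing on (a,b); (2) f^+ is strictly increasing on (a,b); (3) f^+(s) < f^-(t) for all a < s < t < b. -/
open Filter Topology Function Set MeasureTheory

/- Near a point `x` of an open interval, `f⁻(u) → f⁺(x)` as `u ↓ x` and `f⁺(u) → f⁻(x)` as `u ↑ x`.
If `f⁻` is strictly increasing, then for `s < m < t` this gives `f⁺(s) ≤ f⁻(m) < f⁻(t)`, and
symmetrically for `f⁺`. Conversely, condition (3) passes to the limit as `f⁻(x) ≤ f⁺(x)`, whence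
`f⁻(s) ≤ f⁺(s) < f⁻(t)` and `f⁺(s) < f⁻(t) ≤ f⁺(t)`. -/

/-- `x` lies in the interval `(a, b)` with extended-real endpoints. -/
def MemI (a b : EReal) (x : ℝ) : Prop := a < (x : EReal) ∧ (x : EReal) < b

/-- `f` is regulated on `(a, b)`: both one-sided limits exist (as real numbers)
at every point of `(a, b)`. -/
def RegulatedOn' (f : ℝ → ℝ) (a b : EReal) : Prop :=
  ∀ x : ℝ, MemI a b x →
    (∃ L : ℝ, Tendsto f (𝓝[<] x) (𝓝 L)) ∧ ∃ R : ℝ, Tendsto f (𝓝[>] x) (𝓝 R)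

/-- The symmetric `α`-derivative of `f` at `x` equals `A`:
`(D_α f)(x) = lim_{h↓0} (f⁻(x+h) - f⁺(x-h)) / (α⁻(x+h) - α⁺(x-h))`. -/
def HasDerivAlpha (f α : ℝ → ℝ) (x A : ℝ) : Prop :=
  Tendsto (fun h : ℝ =>
      (leftLim f (x + h) - rightLim f (x - h)) /
        (leftLim α (x + h) - rightLim α (x - h)))
    (𝓝[>] (0 : ℝ)) (𝓝 A)

/-- The filter of real numbers approaching `b : EReal` from the left (`x ↑ b`). -/
noncomputable def leftFilter (b : EReal) : Filter ℝ := comap (fun x : ℝ => (x : EReal)) (𝓝[<] b)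

/-- The filter of real numbers approaching `a : EReal` from the right (`x ↓ a`). -/
noncomputable def rightFilter (a : EReal) : Filter ℝ := comap (fun x : ℝ => (x : EReal)) (𝓝[>] a)

section LeftRightLim

variable {α β : Type*} [LinearOrder α] [TopologicalSpace α] [OrderTopology α]

/- `leftLim f u` is a limit of values of `f` on `(x, u)`, and these eventually lie in any closed
neighbourhood of `y`. -/
theorem tendsto_leftLim_nhdsGT [DenselyOrdered α] [TopologicalSpace β] [T3Space β]
    {f : α → β} {x : α} {y : β} (hf : Tendsto f (𝓝[>] x) (𝓝 y))
    (hl : ∀ᶠ u in 𝓝[>] x, ∃ z, Tendsto f (𝓝[<] u) (𝓝 z)) :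
    Tendsto (leftLim f) (𝓝[>] x) (𝓝 y) := by
  refine (closed_nhds_basis y).tendsto_right_iff.2 fun V ⟨hV, hVc⟩ => ?_
  have hfV : ∀ᶠ u in 𝓝[>] x, ∀ᶠ v in 𝓝[<] u, f v ∈ V := by
    have h := (eventually_nhdsWithin_iff.1 (hf hV)).eventually_nhds
    filter_upwards [self_mem_nhdsWithin, eventually_nhdsWithin_of_eventually_nhds h]
      with u (hxu : x < u) hu
    exact eventually_nhdsWithin_of_eventually_nhds
      ((hu.and (Ioi_mem_nhds hxu)).mono fun v hv => hv.1 hv.2)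
  filter_upwards [self_mem_nhdsWithin, hfV, hl] with u (hxu : x < u) hu ⟨z, hz⟩
  have := nhdsLT_neBot_of_exists_lt ⟨x, hxu⟩
  rw [leftLim_eq_of_tendsto hz]
  exact hVc.mem_of_tendsto hz hu

variable [DenselyOrdered α] [LinearOrder β] [TopologicalSpace β] [OrderTopology β]
  {f : α → β} {s : Set α}

theorem tendsto_leftLim_nhdsGT_rightLim (hs : IsOpen s)
    (hf : ∀ x ∈ s, (∃ z, Tendsto f (𝓝[<] x) (𝓝 z)) ∧ ∃ z, Tendsto f (𝓝[>] x) (𝓝 z))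
    {x : α} (hx : x ∈ s) : Tendsto (leftLim f) (𝓝[>] x) (𝓝 (rightLim f x)) := by
  rcases eq_or_neBot (𝓝[>] x) with hbot | hne
  · simp [hbot]
  obtain ⟨z, hz⟩ := (hf x hx).2
  rw [rightLim_eq_of_tendsto hz]
  exact tendsto_leftLim_nhdsGT hz
    ((eventually_nhdsWithin_of_eventually_nhds (hs.mem_nhds hx)).mono fun u hu => (hf u hu).1)

theorem tendsto_rightLim_nhdsLT_leftLim (hs : IsOpen s)
    (hf : ∀ x ∈ s, (∃ z, Tendsto f (𝓝[<] x) (𝓝 z)) ∧ ∃ z, Tendsto f (𝓝[>] x) (𝓝 z))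
    {x : α} (hx : x ∈ s) : Tendsto (rightLim f) (𝓝[<] x) (𝓝 (leftLim f x)) :=
  tendsto_leftLim_nhdsGT_rightLim (α := αᵒᵈ) (f := f) (s := s) hs
    (fun u hu => (hf u hu).symm) hx

theorem rightLim_lt_leftLim_of_strictMonoOn_leftLim
    (hs : IsOpen s) (hc : s.OrdConnected)
    (hf : ∀ x ∈ s, (∃ z, Tendsto f (𝓝[<] x) (𝓝 z)) ∧ ∃ z, Tendsto f (𝓝[>] x) (𝓝 z))
    (hmono : StrictMonoOn (leftLim f) s) {x y : α} (hx : x ∈ s) (hy : y ∈ s)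
    (hxy : x < y) : rightLim f x < leftLim f y := by
  obtain ⟨m, hxm, hmy⟩ := exists_between hxy
  have hm : m ∈ s := hc.out hx hy ⟨hxm.le, hmy.le⟩
  have := nhdsGT_neBot_of_exists_gt ⟨m, hxm⟩
  calc rightLim f x ≤ leftLim f m := by
        refine le_of_tendsto (tendsto_leftLim_nhdsGT_rightLim hs hf hx) ?_
        filter_upwards [Ioo_mem_nhdsGT hxm] with u hu
        exact (hmono (hc.out hx hm (Ioo_subset_Icc_self hu)) hm hu.2).le
    _ < leftLim f y := hmono hm hy hmy

theorem rightLim_lt_leftLim_of_strictMonoOn_rightLim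
    (hs : IsOpen s) (hc : s.OrdConnected)
    (hf : ∀ x ∈ s, (∃ z, Tendsto f (𝓝[<] x) (𝓝 z)) ∧ ∃ z, Tendsto f (𝓝[>] x) (𝓝 z))
    (hmono : StrictMonoOn (rightLim f) s) {x y : α} (hx : x ∈ s) (hy : y ∈ s)
    (hxy : x < y) : rightLim f x < leftLim f y :=
  rightLim_lt_leftLim_of_strictMonoOn_leftLim (α := αᵒᵈ) (β := βᵒᵈ) (f := f) (s := s) hs
    hc.dual (fun u hu => (hf u hu).symm) hmono.dual hy hx hxy

theorem leftLim_le_rightLim_of_rightLim_lt_leftLim [NoMinOrder α] [NoMaxOrder α]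
    (hs : IsOpen s)
    (hf : ∀ x ∈ s, (∃ z, Tendsto f (𝓝[<] x) (𝓝 z)) ∧ ∃ z, Tendsto f (𝓝[>] x) (𝓝 z))
    (h : ∀ x y, x ∈ s → y ∈ s → x < y → rightLim f x < leftLim f y) {x : α} (hx : x ∈ s) :
    leftLim f x ≤ rightLim f x := by
  have hs_near : ∀ᶠ u in 𝓝 x, u ∈ s := hs.mem_nhds hx
  refine le_of_tendsto (tendsto_rightLim_nhdsLT_leftLim hs hf hx) ?_
  filter_upwards [self_mem_nhdsWithin, eventually_nhdsWithin_of_eventually_nhds hs_near]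
    with w (hwx : w < x) hw
  refine ge_of_tendsto (tendsto_leftLim_nhdsGT_rightLim hs hf hx) ?_
  filter_upwards [self_mem_nhdsWithin, eventually_nhdsWithin_of_eventually_nhds hs_near]
    with u (hxu : x < u) hu
  exact (h w u hw hu (hwx.trans hxu)).le

theorem strictMonoOn_leftLim_iff [NoMinOrder α] [NoMaxOrder α]
    (hs : IsOpen s) (hc : s.OrdConnected)
    (hf : ∀ x ∈ s, (∃ z, Tendsto f (𝓝[<] x) (𝓝 z)) ∧ ∃ z, Tendsto f (𝓝[>] x) (𝓝 z)) :
    StrictMonoOn (leftLim f) s ↔ ∀ x y, x ∈ s → y ∈ s → x < y → rightLim f x < leftLim f y :=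
  ⟨fun hmono _ _ => rightLim_lt_leftLim_of_strictMonoOn_leftLim hs hc hf hmono,
    fun h x hx y hy hxy =>
      (leftLim_le_rightLim_of_rightLim_lt_leftLim hs hf h hx).trans_lt (h x y hx hy hxy)⟩

theorem strictMonoOn_rightLim_iff [NoMinOrder α] [NoMaxOrder α]
    (hs : IsOpen s) (hc : s.OrdConnected)
    (hf : ∀ x ∈ s, (∃ z, Tendsto f (𝓝[<] x) (𝓝 z)) ∧ ∃ z, Tendsto f (𝓝[>] x) (𝓝 z)) :
    StrictMonoOn (rightLim f) s ↔ ∀ x y, x ∈ s → y ∈ s → x < y → rightLim f x < leftLim f y :=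
  ⟨fun hmono _ _ => rightLim_lt_leftLim_of_strictMonoOn_rightLim hs hc hf hmono,
    fun h x hx y hy hxy =>
      (h x y hx hy hxy).trans_le (leftLim_le_rightLim_of_rightLim_lt_leftLim hs hf h hy)⟩

end LeftRightLim

theorem stmt1_general (a b : EReal) (f : ℝ → ℝ)
    (hf : RegulatedOn' f a b) :
    (StrictMonoOn (leftLim f) {x : ℝ | MemI a b x} ↔
      StrictMonoOn (rightLim f) {x : ℝ | MemI a b x}) ∧
    (StrictMonoOn (leftLim f) {x : ℝ | MemI a b x} ↔
      ∀ s t : ℝ, MemI a b s → MemI a b t → s < t → rightLim f s < leftLim f t) := by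
  have hs : IsOpen {x : ℝ | MemI a b x} := isOpen_Ioo.preimage continuous_coe_real_ereal
  have hc : {x : ℝ | MemI a b x}.OrdConnected :=
    ordConnected_Ioo.preimage_mono EReal.coe_strictMono.monotone
  exact ⟨(strictMonoOn_leftLim_iff hs hc hf).trans (strictMonoOn_rightLim_iff hs hc hf).symm,
    strictMonoOn_leftLim_iff hs hc hf⟩

/-- For a regulated `f` on `(a,b)`, the following are equivalent:
`f⁻` strictly increasing, `f⁺` strictly increasing, and
`f⁺(s) < f⁻(t)` for all `a < s < t < b`. -/
theorem stmt1 (a b : EReal) (hab : a < b) (f : ℝ → ℝ)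
    (hf : RegulatedOn' f a b) :
    (StrictMonoOn (leftLim f) {x : ℝ | MemI a b x} ↔
      StrictMonoOn (rightLim f) {x : ℝ | MemI a b x}) ∧
    (StrictMonoOn (leftLim f) {x : ℝ | MemI a b x} ↔
      ∀ s t : ℝ, MemI a b s → MemI a b t → s < t → rightLim f s < leftLim f t) :=
  stmt1_general a b f hf
end

section
/- Let f be regulated on (a,b) and α strictly increasing on (a,b). If the symmetric α-derivative (D_α f)(x) = lim_{h↓0} (f^-(x+h) - f^+(x-h))/(α^-(x+h) - α^+(x-h)) exists, then it equals lim_{h↓0} (f^+(x+h) - f^-(x-h))/(α^+(x+h) - α^-(x-h)). -/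
open Filter Topology Function Set MeasureTheory

/-! For `0 < h` and `φ ∈ {f, α}`, letting `h' ↓ h` sends `leftLim φ (x + h')` to
`rightLim φ (x + h)` and `rightLim φ (x - h')` to `leftLim φ (x - h)`: a function with a limit
on one side of a point has its opposite one-sided limits converging to the same value. Since `α`
is strictly increasing the limiting denominator is positive, so the exchanged quotient at `h` is
the limit of the symmetric quotient as `h' ↓ h`. Values that are limits of values of a function
converging to `A` lie in every closed neighbourhood of `A`, hence the exchanged quotient also
tends to `A`. -/

section ClusterPoints

variable {α β : Type*} [TopologicalSpace α] [TopologicalSpace β] [RegularSpace β]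

theorem tendsto_nhdsWithin_of_mapClusterPt {s : Set α} (hs : IsOpen s) {f g : α → β} {a : α}
    {b : β} (h : Tendsto f (𝓝[s] a) (𝓝 b)) (h' : ∀ᶠ x in 𝓝[s] a, MapClusterPt (g x) (𝓝 x) f) :
    Tendsto g (𝓝[s] a) (𝓝 b) := by
  refine (closed_nhds_basis b).tendsto_right_iff.2 fun U ⟨hU, hUc⟩ => ?_
  filter_upwards [h', eventually_eventually_nhdsWithin.2 (h hU), self_mem_nhdsWithin]
    with x hx hxU hxs
  exact hUc.mem_of_mapClusterPt hx (by rwa [hs.nhdsWithin_eq hxs] at hxU)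

variable [LinearOrder α] [OrderTopology α] {f : α → β} {a : α} {b : β}

theorem Filter.Tendsto.leftLim_nhdsGT (h : Tendsto f (𝓝[>] a) (𝓝 b)) :
    Tendsto (leftLim f) (𝓝[>] a) (𝓝 b) :=
  tendsto_nhdsWithin_of_mapClusterPt isOpen_Ioi h
    (.of_forall fun x => (mapClusterPt_leftLim f x).mono nhdsWithin_le_nhds)

theorem Filter.Tendsto.rightLim_nhdsLT (h : Tendsto f (𝓝[<] a) (𝓝 b)) :
    Tendsto (rightLim f) (𝓝[<] a) (𝓝 b) :=
  tendsto_nhdsWithin_of_mapClusterPt isOpen_Iio h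
    (.of_forall fun x => (mapClusterPt_rightLim f x).mono nhdsWithin_le_nhds)

end ClusterPoints

namespace MonotoneOn

variable {α β : Type*} [LinearOrder α] [TopologicalSpace α] [OrderTopology α] [DenselyOrdered α]
  [ConditionallyCompleteLinearOrder β] [TopologicalSpace β] [OrderTopology β]
  {f : α → β} {s : Set α} {y : α}

theorem tendsto_leftLim [NoMinOrder α] (hf : MonotoneOn f s) (hs : s ∈ 𝓝 y) :
    Tendsto f (𝓝[<] y) (𝓝 (leftLim f y)) := by
  obtain ⟨c, hcy, hc⟩ := exists_Ioc_subset_of_mem_nhds hs (exists_lt y)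
  have hIoo : Ioo c y ⊆ s := Ioo_subset_Ioc_self.trans hc
  have hbdd : BddAbove (f '' Ioo c y) := by
    refine ⟨f y, ?_⟩
    rintro _ ⟨z, hz, rfl⟩
    exact hf (hIoo hz) (mem_of_mem_nhds hs) hz.2.le
  exact tendsto_leftLim_of_tendsto
    ⟨_, (hf.mono hIoo).tendsto_nhdsWithin_Ioo_left (nonempty_Ioo.2 hcy) hbdd⟩

theorem tendsto_rightLim [NoMaxOrder α] (hf : MonotoneOn f s) (hs : s ∈ 𝓝 y) :
    Tendsto f (𝓝[>] y) (𝓝 (rightLim f y)) :=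
  tendsto_leftLim (α := αᵒᵈ) (β := βᵒᵈ) hf.dual hs

theorem leftLim_le [NoMinOrder α] (hf : MonotoneOn f s) (hs : s ∈ 𝓝 y) : leftLim f y ≤ f y := by
  refine le_of_tendsto (hf.tendsto_leftLim hs) ?_
  filter_upwards [nhdsWithin_le_nhds hs, self_mem_nhdsWithin] with z hz hzy
  exact hf hz (mem_of_mem_nhds hs) (le_of_lt hzy)

theorem le_rightLim [NoMaxOrder α] (hf : MonotoneOn f s) (hs : s ∈ 𝓝 y) : f y ≤ rightLim f y :=
  leftLim_le (α := αᵒᵈ) (β := βᵒᵈ) hf.dual hs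

end MonotoneOn

section Translation

variable {G : Type*} [AddCommGroup G] [LinearOrder G] [IsOrderedAddMonoid G] [TopologicalSpace G]
  [OrderTopology G]

theorem tendsto_const_add_nhdsGT (x h : G) : Tendsto (x + ·) (𝓝[>] h) (𝓝[>] (x + h)) :=
  tendsto_nhdsWithin_iff.2 ⟨(continuous_const_add x).continuousWithinAt.tendsto,
    eventually_nhdsWithin_of_forall fun _ hz => (add_lt_add_iff_left x).2 hz⟩

theorem tendsto_const_sub_nhdsGT (x h : G) : Tendsto (x - ·) (𝓝[>] h) (𝓝[<] (x - h)) :=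
  tendsto_nhdsWithin_iff.2 ⟨(continuous_sub_left x).continuousWithinAt.tendsto,
    eventually_nhdsWithin_of_forall fun _ hz => sub_lt_sub_left hz x⟩

end Translation

theorem tendsto_leftLim_add_sub_rightLim_sub {φ : ℝ → ℝ} {x h : ℝ}
    (hr : Tendsto φ (𝓝[>] (x + h)) (𝓝 (rightLim φ (x + h))))
    (hl : Tendsto φ (𝓝[<] (x - h)) (𝓝 (leftLim φ (x - h)))) :
    Tendsto (fun h' => leftLim φ (x + h') - rightLim φ (x - h')) (𝓝[>] h)
      (𝓝 (rightLim φ (x + h) - leftLim φ (x - h))) :=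
  (hr.leftLim_nhdsGT.comp (tendsto_const_add_nhdsGT x h)).sub
    (hl.rightLim_nhdsLT.comp (tendsto_const_sub_nhdsGT x h))

theorem isOpen_setOf_memI (a b : EReal) : IsOpen {y : ℝ | MemI a b y} :=
  isOpen_Ioo.preimage continuous_coe_real_ereal

theorem stmt3_general (a b : EReal) (f α : ℝ → ℝ)
    (hf : RegulatedOn' f a b) (hα : StrictMonoOn α {x : ℝ | MemI a b x})
    (x A : ℝ) (hx : MemI a b x) (hD : HasDerivAlpha f α x A) :
    Tendsto (fun h : ℝ =>
        (rightLim f (x + h) - leftLim f (x - h)) /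
          (rightLim α (x + h) - leftLim α (x - h)))
      (𝓝[>] (0 : ℝ)) (𝓝 A) := by
  set I := {y : ℝ | MemI a b y}
  have hI : IsOpen I := isOpen_setOf_memI a b
  have f_left {y} (hy : y ∈ I) : Tendsto f (𝓝[<] y) (𝓝 (leftLim f y)) :=
    tendsto_leftLim_of_tendsto (hf y hy).1
  have f_right {y} (hy : y ∈ I) : Tendsto f (𝓝[>] y) (𝓝 (rightLim f y)) :=
    tendsto_rightLim_of_tendsto (hf y hy).2
  have hxI := hI.mem_nhds hx
  refine tendsto_nhdsWithin_of_mapClusterPt isOpen_Ioi hD ?_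
  filter_upwards [tendsto_nhdsWithin_of_tendsto_nhds
      ((continuous_const_add x).tendsto' 0 x (add_zero x)) hxI,
    tendsto_nhdsWithin_of_tendsto_nhds ((continuous_sub_left x).tendsto' 0 x (sub_zero x)) hxI,
    self_mem_nhdsWithin] with h hp hm (h0 : 0 < h)
  have hαI := hα.monotoneOn
  have hden : leftLim α (x - h) < rightLim α (x + h) :=
    calc leftLim α (x - h) ≤ α (x - h) := hαI.leftLim_le (hI.mem_nhds hm)
      _ < α (x + h) := hα hm hp (by linarith)
      _ ≤ rightLim α (x + h) := hαI.le_rightLim (hI.mem_nhds hp)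
  have hlim := (tendsto_leftLim_add_sub_rightLim_sub (f_right hp) (f_left hm)).div
    (tendsto_leftLim_add_sub_rightLim_sub (hαI.tendsto_rightLim (hI.mem_nhds hp))
      (hαI.tendsto_leftLim (hI.mem_nhds hm))) (sub_pos.2 hden).ne'
  exact hlim.mapClusterPt.mono nhdsWithin_le_nhds

/-- The symmetric `α`-derivative can equivalently be computed with the roles of
the one-sided limits exchanged. -/
theorem stmt3 (a b : EReal) (hab : a < b) (f α : ℝ → ℝ)
    (hf : RegulatedOn' f a b) (hα : StrictMonoOn α {x : ℝ | MemI a b x})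
    (x A : ℝ) (hx : MemI a b x) (hD : HasDerivAlpha f α x A) :
    Tendsto (fun h : ℝ =>
        (rightLim f (x + h) - leftLim f (x - h)) /
          (rightLim α (x + h) - leftLim α (x - h)))
      (𝓝[>] (0 : ℝ)) (𝓝 A) :=
  stmt3_general a b f α hf hα x A hx hD
end

section
/- Product rule for the α-derivative: Let f, g be regulated on (a,b) and α strictly increasing on (a,b). If (D_α f)(x) and (D_α g)(x) exist at x ∈ (a,b), then (D_α (fg))(x) exists and equals g^-(x)(D_α f)(x) + f^+(x)(D_α g)(x), and also equals g^+(x)(D_α f)(x) + f^-(x)(D_α g)(x). -/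
/-!
Writing `Δu = u⁻(x+h) - u⁺(x-h)`, the numerator of the quotient for `fg` is
`f⁻(x+h) Δg + g⁺(x-h) Δf`, and also `f⁺(x-h) Δg + g⁻(x+h) Δf`, because one-sided
limits of regulated functions are multiplicative. It remains that `f⁻(x+h) → f⁺(x)`
and `f⁺(x-h) → f⁻(x)` as `h ↓ 0`; this holds with no regularity near `x`, since
`f⁻(y)` is always a cluster value of `f` at `y` from the left.
-/

open Filter Topology Function Set MeasureTheory

section LeftRightLim

variable {α β : Type*} [LinearOrder α] [TopologicalSpace α] [OrderTopology α] [TopologicalSpace β]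

def RegulatedAt (f : α → β) (a : α) : Prop :=
  (∃ L, Tendsto f (𝓝[<] a) (𝓝 L)) ∧ ∃ R, Tendsto f (𝓝[>] a) (𝓝 R)

theorem tendsto_leftLim_nhdsGT_of_tendsto [T3Space β] {f : α → β} {a : α} {b : β}
    (h : Tendsto f (𝓝[>] a) (𝓝 b)) : Tendsto (leftLim f) (𝓝[>] a) (𝓝 b) := by
  refine (closed_nhds_basis b).tendsto_right_iff.2 fun s ⟨s_mem, s_closed⟩ => ?_
  rcases eq_or_neBot (𝓝[>] a) with hbot | _
  · simp [hbot]
  obtain ⟨v, hv⟩ := Filter.nonempty_of_mem (self_mem_nhdsWithin : Ioi a ∈ 𝓝[>] a)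
  obtain ⟨u, au, hu⟩ := (mem_nhdsGT_iff_exists_Ioo_subset' hv).1 (h s_mem)
  filter_upwards [Ioo_mem_nhdsGT au] with c hc
  refine s_closed.mem_of_mapClusterPt (mapClusterPt_leftLim f c) ?_
  filter_upwards [Ioc_mem_nhdsLE hc.1] with d hd using hu ⟨hd.1, hd.2.trans_lt hc.2⟩

theorem tendsto_rightLim_nhdsLT_of_tendsto [T3Space β] {f : α → β} {a : α} {b : β}
    (h : Tendsto f (𝓝[<] a) (𝓝 b)) : Tendsto (rightLim f) (𝓝[<] a) (𝓝 b) :=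
  tendsto_leftLim_nhdsGT_of_tendsto (α := αᵒᵈ) h

theorem leftLim_mul [Mul β] [ContinuousMul β] [T2Space β] {f g : α → β} {a : α}
    (hf : ∃ L, Tendsto f (𝓝[<] a) (𝓝 L)) (hg : ∃ M, Tendsto g (𝓝[<] a) (𝓝 M)) :
    leftLim (fun t => f t * g t) a = leftLim f a * leftLim g a := by
  rcases eq_or_neBot (𝓝[<] a) with hbot | _
  · simp only [leftLim_eq_of_eq_bot _ hbot]
  · exact leftLim_eq_of_tendsto
      ((tendsto_leftLim_of_tendsto hf).mul (tendsto_leftLim_of_tendsto hg))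

theorem rightLim_mul [Mul β] [ContinuousMul β] [T2Space β] {f g : α → β} {a : α}
    (hf : ∃ R, Tendsto f (𝓝[>] a) (𝓝 R)) (hg : ∃ S, Tendsto g (𝓝[>] a) (𝓝 S)) :
    rightLim (fun t => f t * g t) a = rightLim f a * rightLim g a :=
  leftLim_mul (α := αᵒᵈ) hf hg

end LeftRightLim

section

variable {G : Type*} [AddCommGroup G] [LinearOrder G] [IsOrderedAddMonoid G]
  [TopologicalSpace G]

theorem tendsto_const_add_nhdsGT_zero [ContinuousAdd G] (x : G) :
    Tendsto (x + ·) (𝓝[>] 0) (𝓝[>] x) :=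
  tendsto_nhdsWithin_of_tendsto_nhds_of_eventually_within _
    (by simpa using ((continuous_const_add x).tendsto 0).mono_left nhdsWithin_le_nhds)
    (eventually_nhdsWithin_of_forall fun _ h => lt_add_of_pos_right x h)

theorem tendsto_const_sub_nhdsGT_zero [ContinuousSub G] (x : G) :
    Tendsto (x - ·) (𝓝[>] 0) (𝓝[<] x) :=
  tendsto_nhdsWithin_of_tendsto_nhds_of_eventually_within _
    (by simpa using ((continuous_sub_left x).tendsto 0).mono_left nhdsWithin_le_nhds)
    (eventually_nhdsWithin_of_forall fun _ h => sub_lt_self x h)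

end

section

variable {ι 𝕜 : Type*} [Field 𝕜] [TopologicalSpace 𝕜] [IsTopologicalRing 𝕜] {l : Filter ι}
  {p q r s d : ι → 𝕜} {A B : 𝕜}

theorem tendsto_mul_sub_mul_div_of_tendsto_left {P S : 𝕜} (hp : Tendsto p l (𝓝 P))
    (hs : Tendsto s l (𝓝 S)) (hA : Tendsto (fun i => (p i - q i) / d i) l (𝓝 A))
    (hB : Tendsto (fun i => (r i - s i) / d i) l (𝓝 B)) :
    Tendsto (fun i => (p i * r i - q i * s i) / d i) l (𝓝 (S * A + P * B)) :=
  ((hs.mul hA).add (hp.mul hB)).congr fun i => by ring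

theorem tendsto_mul_sub_mul_div_of_tendsto_right {Q R : 𝕜} (hq : Tendsto q l (𝓝 Q))
    (hr : Tendsto r l (𝓝 R)) (hA : Tendsto (fun i => (p i - q i) / d i) l (𝓝 A))
    (hB : Tendsto (fun i => (r i - s i) / d i) l (𝓝 B)) :
    Tendsto (fun i => (p i * r i - q i * s i) / d i) l (𝓝 (R * A + Q * B)) :=
  ((hr.mul hA).add (hq.mul hB)).congr fun i => by ring

end

section

variable {f g α : ℝ → ℝ} {x Df Dg : ℝ}

theorem tendsto_leftLim_const_add_nhdsGT_zero (hf : ∃ R, Tendsto f (𝓝[>] x) (𝓝 R)) :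
    Tendsto (fun h => leftLim f (x + h)) (𝓝[>] 0) (𝓝 (rightLim f x)) :=
  (tendsto_leftLim_nhdsGT_of_tendsto (tendsto_rightLim_of_tendsto hf)).comp
    (tendsto_const_add_nhdsGT_zero x)

theorem tendsto_rightLim_const_sub_nhdsGT_zero (hf : ∃ L, Tendsto f (𝓝[<] x) (𝓝 L)) :
    Tendsto (fun h => rightLim f (x - h)) (𝓝[>] 0) (𝓝 (leftLim f x)) :=
  (tendsto_rightLim_nhdsLT_of_tendsto (tendsto_leftLim_of_tendsto hf)).comp
    (tendsto_const_sub_nhdsGT_zero x)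

theorem leftLim_sub_rightLim_mul_eventuallyEq (hf : ∀ᶠ y in 𝓝 x, RegulatedAt f y)
    (hg : ∀ᶠ y in 𝓝 x, RegulatedAt g y) :
    (fun h => leftLim (fun t => f t * g t) (x + h) - rightLim (fun t => f t * g t) (x - h))
      =ᶠ[𝓝[>] 0]
    fun h => leftLim f (x + h) * leftLim g (x + h) - rightLim f (x - h) * rightLim g (x - h) := by
  have hfg := hf.and hg
  filter_upwards
    [((tendsto_const_add_nhdsGT_zero x).mono_right nhdsWithin_le_nhds).eventually hfg,
    ((tendsto_const_sub_nhdsGT_zero x).mono_right nhdsWithin_le_nhds).eventually hfg]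
    with h ⟨hf_add, hg_add⟩ ⟨hf_sub, hg_sub⟩
  rw [leftLim_mul hf_add.1 hg_add.1, rightLim_mul hf_sub.2 hg_sub.2]

theorem HasDerivAlpha.mul (hf : ∀ᶠ y in 𝓝 x, RegulatedAt f y)
    (hg : ∀ᶠ y in 𝓝 x, RegulatedAt g y)
    (hDf : HasDerivAlpha f α x Df) (hDg : HasDerivAlpha g α x Dg) :
    HasDerivAlpha (fun t => f t * g t) α x (leftLim g x * Df + rightLim f x * Dg) ∧
      HasDerivAlpha (fun t => f t * g t) α x (rightLim g x * Df + leftLim f x * Dg) := by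
  have hquot := (leftLim_sub_rightLim_mul_eventuallyEq hf hg).div
    (EventuallyEq.refl _ fun h => leftLim α (x + h) - rightLim α (x - h))
  obtain ⟨hfx, hgx⟩ := (hf.and hg).self_of_nhds
  exact ⟨(tendsto_mul_sub_mul_div_of_tendsto_left (tendsto_leftLim_const_add_nhdsGT_zero hfx.2)
      (tendsto_rightLim_const_sub_nhdsGT_zero hgx.1) hDf hDg).congr' hquot.symm,
    (tendsto_mul_sub_mul_div_of_tendsto_right (tendsto_rightLim_const_sub_nhdsGT_zero hfx.1)
      (tendsto_leftLim_const_add_nhdsGT_zero hgx.2) hDf hDg).congr' hquot.symm⟩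

end

theorem RegulatedOn'.eventually_regulatedAt {f : ℝ → ℝ} {a b : EReal} {x : ℝ}
    (hf : RegulatedOn' f a b) (hx : MemI a b x) : ∀ᶠ y in 𝓝 x, RegulatedAt f y :=
  mem_of_superset ((isOpen_Ioo.preimage continuous_coe_real_ereal).mem_nhds hx) hf

theorem stmt7_general (a b : EReal) (f g α : ℝ → ℝ)
    (hf : RegulatedOn' f a b) (hg : RegulatedOn' g a b)
    (x Df Dg : ℝ) (hx : MemI a b x)
    (hDf : HasDerivAlpha f α x Df) (hDg : HasDerivAlpha g α x Dg) :
    HasDerivAlpha (fun t => f t * g t) α x (leftLim g x * Df + rightLim f x * Dg) ∧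
    HasDerivAlpha (fun t => f t * g t) α x (rightLim g x * Df + leftLim f x * Dg) :=
  HasDerivAlpha.mul (hf.eventually_regulatedAt hx) (hg.eventually_regulatedAt hx) hDf hDg

/-- Product rule for the symmetric `α`-derivative. -/
theorem stmt7 (a b : EReal) (hab : a < b) (f g α : ℝ → ℝ)
    (hf : RegulatedOn' f a b) (hg : RegulatedOn' g a b)
    (hα : StrictMonoOn α {x : ℝ | MemI a b x})
    (x Df Dg : ℝ) (hx : MemI a b x)
    (hDf : HasDerivAlpha f α x Df) (hDg : HasDerivAlpha g α x Dg) :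
    HasDerivAlpha (fun t => f t * g t) α x (leftLim g x * Df + rightLim f x * Dg) ∧
    HasDerivAlpha (fun t => f t * g t) α x (rightLim g x * Df + leftLim f x * Dg) :=
  stmt7_general a b f g α hf hg x Df Dg hx hDf hDg
end
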